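/- arXiv:2407.08934 — 2 statements merged into one kernel-verified Lean document; each statement's English description precedes it below -/
import Mathlib

section
/- For any two distinct subsets J, J' ⊆ {1,…,k}, the composition Q_J ∘ Q_{J'} = 0 as an operator on maps Z → V. -/
open Finset

/-- Averaging operator π_J. -/
noncomputable def piAvg {ι : Type*} [Fintype ι] [DecidableEq ι] {Z : ι → Type*} [∀ i, Fintype (Z i)]
    [∀ i, DecidableEq (Z i)] {V : Type*} [AddCommGroup V] [Module ℝ V]
    (J : Finset ι) (w : (∀ i, Z i) → V) : (∀ i, Z i) → V :=
  fun z => (∏ i ∈ Jᶜ, (Fintype.card (Z i) : ℝ))⁻¹ •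
    ∑ z' ∈ Finset.univ.filter (fun z' : ∀ i, Z i => ∀ i ∈ J, z' i = z i), w z'

/-- Interaction projection Q_I. -/
noncomputable def Qop {ι : Type*} [Fintype ι] [DecidableEq ι] {Z : ι → Type*} [∀ i, Fintype (Z i)]
    [∀ i, DecidableEq (Z i)] {V : Type*} [AddCommGroup V] [Module ℝ V]
    (I : Finset ι) (w : (∀ i, Z i) → V) : (∀ i, Z i) → V :=
  ∑ J ∈ I.powerset, ((-1 : ℝ) ^ (I \ J).card) • piAvg J w

/-- Pure interaction space E_I. -/
def pureInteraction {ι : Type*} [Fintype ι] [DecidableEq ι] (Z : ι → Type*)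
    [∀ i, Fintype (Z i)] [∀ i, DecidableEq (Z i)] (V : Type*) [AddCommGroup V] [Module ℝ V]
    (I : Finset ι) : Submodule ℝ ((∀ i, Z i) → V) where
  carrier := {w | (∀ z z' : ∀ i, Z i, (∀ i ∈ I, z i = z' i) → w z = w z') ∧
    ∀ J : Finset ι, J ⊂ I → ∀ z : ∀ i, Z i,
      ∑ z' ∈ Finset.univ.filter (fun z' : ∀ i, Z i => ∀ i ∈ J, z' i = z i), w z' = 0}
  add_mem' := by
    rintro a b ⟨ha1, ha2⟩ ⟨hb1, hb2⟩
    refine ⟨fun z z' h => by simp only [Pi.add_apply, ha1 z z' h, hb1 z z' h],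
      fun J hJ z => ?_⟩
    simp only [Pi.add_apply, Finset.sum_add_distrib]
    rw [ha2 J hJ z, hb2 J hJ z, add_zero]
  zero_mem' := by
    refine ⟨fun z z' _ => rfl, fun J hJ z => by simp⟩
  smul_mem' := by
    rintro c a ⟨ha1, ha2⟩
    refine ⟨fun z z' h => by simp only [Pi.smul_apply, ha1 z z' h], fun J hJ z => ?_⟩
    simp only [Pi.smul_apply, ← Finset.smul_sum]
    rw [ha2 J hJ z, smul_zero]

/-!
Write `π_A` for the average over the coordinates outside `A`. Averaging first outside `B` and then
outside `A` averages outside `A ∩ B`, so `π_A ∘ π_B = π_{A ∩ B}`; in particular the `π`'s, and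
hence the `Q`'s, commute. If `i ∈ J \ B`, the subsets `A` and `insert i A` of `J` give the same
`π_{A ∩ B}` with opposite signs in `Q_J ∘ π_B`, so `Q_J ∘ π_B = 0` whenever `J ⊄ B`. Expanding
`Q_{J'}` then kills `Q_J ∘ Q_{J'}` when `J ⊄ J'`, and commutativity handles `J' ⊄ J`.
-/

theorem Finset.sum_powerset_neg_one_pow_card_sdiff_smul_eq_zero {α R M : Type*} [DecidableEq α]
    [Ring R] [AddCommGroup M] [Module R M] {s : Finset α} {i : α} (hi : i ∈ s)
    {f : Finset α → M} (hf : ∀ t, f (insert i t) = f t) :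
    ∑ t ∈ s.powerset, (-1 : R) ^ #(s \ t) • f t = 0 := by
  have hi' : i ∉ s.erase i := notMem_erase i s
  rw [← insert_erase hi, sum_powerset_insert hi', ← sum_add_distrib]
  refine sum_eq_zero fun t ht => ?_
  have hit : i ∉ t := notMem_mono (mem_powerset.1 ht) hi'
  rw [insert_sdiff_of_notMem _ hit, insert_sdiff_insert, card_insert_of_notMem (by simp),
    sdiff_insert_of_notMem hi', hf, pow_succ, mul_neg_one, neg_smul, neg_add_cancel]

section

variable {ι : Type*} [Fintype ι] [DecidableEq ι] {Z : ι → Type*} [∀ i, Fintype (Z i)]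
  [∀ i, DecidableEq (Z i)]

def fiber (A : Finset ι) (z : ∀ i, Z i) : Finset (∀ i, Z i) :=
  univ.filter fun z' => ∀ i ∈ A, z' i = z i

theorem mem_fiber {A : Finset ι} {z z' : ∀ i, Z i} : z' ∈ fiber A z ↔ ∀ i ∈ A, z' i = z i := by
  simp [fiber]

theorem mem_fiber_comm {A : Finset ι} {z z' : ∀ i, Z i} : z' ∈ fiber A z ↔ z ∈ fiber A z' := by
  simp only [mem_fiber, eq_comm]

theorem fiber_eq_piFinset (A : Finset ι) (z : ∀ i, Z i) :
    fiber A z = Fintype.piFinset fun i => if i ∈ A then {z i} else univ := by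
  ext z'
  simp only [mem_fiber, Fintype.mem_piFinset]
  refine forall_congr' fun i => ?_
  split_ifs with hi <;> simp [hi]

theorem card_fiber_inter_fiber (A B : Finset ι) (z z' : ∀ i, Z i) :
    #(fiber A z ∩ fiber B z') =
      if z' ∈ fiber (A ∩ B) z then ∏ i ∈ (A ∪ B)ᶜ, Fintype.card (Z i) else 0 := by
  rw [fiber_eq_piFinset, fiber_eq_piFinset, ← Fintype.piFinset_inter, Fintype.card_piFinset]
  split_ifs with h
  · rw [← prod_subset (subset_univ (A ∪ B)ᶜ)]
    · exact prod_congr rfl fun i hi => by simp_all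
    · intro i _ hi
      have hzi := mem_fiber.1 h i
      rw [mem_compl, not_not, mem_union] at hi
      rw [mem_inter] at hzi
      split_ifs <;> simp_all
  · obtain ⟨i, hiA, hiB, hne⟩ : ∃ i ∈ A, i ∈ B ∧ z' i ≠ z i := by simpa [mem_fiber] using h
    refine prod_eq_zero (mem_univ i) ?_
    simp [hiA, hiB, Ne.symm hne]

variable {V : Type*} [AddCommGroup V]

theorem sum_fiber_sum_fiber (A B : Finset ι) (z : ∀ i, Z i) (w : (∀ i, Z i) → V) :
    ∑ z' ∈ fiber A z, ∑ z'' ∈ fiber B z', w z'' =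
      (∏ i ∈ (A ∪ B)ᶜ, Fintype.card (Z i)) • ∑ z'' ∈ fiber (A ∩ B) z, w z'' := by
  rw [sum_comm' (t' := univ) (s' := fun z'' => fiber A z ∩ fiber B z'')]
  · simp only [sum_const, card_fiber_inter_fiber, ite_smul, zero_smul, sum_ite_mem, univ_inter,
      smul_sum]
  · intro z' z''
    simp only [mem_inter, mem_univ, and_true]
    rw [mem_fiber_comm (z := z')]

variable [Module ℝ V]

theorem piAvg_apply (A : Finset ι) (w : (∀ i, Z i) → V) (z : ∀ i, Z i) :
    piAvg A w z = (∏ i ∈ Aᶜ, (Fintype.card (Z i) : ℝ))⁻¹ • ∑ z' ∈ fiber A z, w z' :=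
  rfl

theorem piAvg_piAvg (A B : Finset ι) (w : (∀ i, Z i) → V) :
    piAvg A (piAvg B w) = piAvg (A ∩ B) w := by
  funext z
  have hc : ∀ S : Finset ι, ∏ i ∈ S, (Fintype.card (Z i) : ℝ) ≠ 0 := fun S =>
    prod_ne_zero_iff.2 fun i _ => Nat.cast_ne_zero.2 (Fintype.card_pos_iff.2 ⟨z i⟩).ne'
  have hcompl := prod_union_inter (s₁ := Aᶜ) (s₂ := Bᶜ) (f := fun i => (Fintype.card (Z i) : ℝ))
  rw [← compl_inter, ← compl_union] at hcompl
  simp only [piAvg_apply, ← smul_sum, smul_smul, sum_fiber_sum_fiber, ← Nat.cast_smul_eq_nsmul ℝ,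
    Nat.cast_prod]
  congr 1
  field_simp [hc]
  linear_combination hcompl

noncomputable def piAvgₗ (A : Finset ι) : Module.End ℝ ((∀ i, Z i) → V) where
  toFun := piAvg A
  map_add' w w' := by
    funext z
    simp only [piAvg_apply, Pi.add_apply, sum_add_distrib, smul_add]
  map_smul' c w := by
    funext z
    simp only [piAvg_apply, Pi.smul_apply, ← smul_sum, smul_comm c, RingHom.id_apply]

theorem piAvgₗ_mul_piAvgₗ (A B : Finset ι) :
    (piAvgₗ A * piAvgₗ B : Module.End ℝ ((∀ i, Z i) → V)) = piAvgₗ (A ∩ B) :=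
  LinearMap.ext (piAvg_piAvg A B)

theorem commute_piAvgₗ (A B : Finset ι) :
    Commute (piAvgₗ A : Module.End ℝ ((∀ i, Z i) → V)) (piAvgₗ B) := by
  rw [Commute, SemiconjBy, piAvgₗ_mul_piAvgₗ, piAvgₗ_mul_piAvgₗ, inter_comm]

noncomputable def Qopₗ (I : Finset ι) : Module.End ℝ ((∀ i, Z i) → V) :=
  ∑ J ∈ I.powerset, (-1 : ℝ) ^ #(I \ J) • piAvgₗ J

theorem Qopₗ_apply (I : Finset ι) (w : (∀ i, Z i) → V) : Qopₗ I w = Qop I w := by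
  simp [Qopₗ, Qop, LinearMap.sum_apply, piAvgₗ]

theorem commute_Qopₗ (I I' : Finset ι) :
    Commute (Qopₗ I : Module.End ℝ ((∀ i, Z i) → V)) (Qopₗ I') :=
  .sum_left _ _ _ fun A _ => .sum_right _ _ _ fun B _ =>
    ((commute_piAvgₗ A B).smul_left _).smul_right _

theorem Qopₗ_mul_piAvgₗ_of_not_subset {I B : Finset ι} (h : ¬I ⊆ B) :
    (Qopₗ I * piAvgₗ B : Module.End ℝ ((∀ i, Z i) → V)) = 0 := by
  obtain ⟨i, hiI, hiB⟩ := not_subset.1 h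
  simp only [Qopₗ, sum_mul, smul_mul_assoc, piAvgₗ_mul_piAvgₗ]
  exact sum_powerset_neg_one_pow_card_sdiff_smul_eq_zero hiI fun t => by
    rw [insert_inter_of_notMem hiB]

theorem Qopₗ_mul_Qopₗ_of_not_subset {I I' : Finset ι} (h : ¬I ⊆ I') :
    (Qopₗ I * Qopₗ I' : Module.End ℝ ((∀ i, Z i) → V)) = 0 := by
  rw [Qopₗ.eq_1 I', mul_sum]
  refine sum_eq_zero fun B hB => ?_
  rw [mul_smul_comm, Qopₗ_mul_piAvgₗ_of_not_subset fun hIB => h (hIB.trans (mem_powerset.1 hB)),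
    smul_zero]

theorem Qopₗ_mul_Qopₗ_of_ne {I I' : Finset ι} (h : I ≠ I') :
    (Qopₗ I * Qopₗ I' : Module.End ℝ ((∀ i, Z i) → V)) = 0 := by
  by_cases hII' : I ⊆ I'
  · rw [(commute_Qopₗ I I').eq]
    exact Qopₗ_mul_Qopₗ_of_not_subset fun hI'I => h (subset_antisymm hII' hI'I)
  · exact Qopₗ_mul_Qopₗ_of_not_subset hII'

end

theorem Qop_comp_Qop_eq_zero_general {k : ℕ} (Z : Fin k → Type*)
    [∀ i, Fintype (Z i)] [∀ i, DecidableEq (Z i)]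
    (V : Type*) [AddCommGroup V] [Module ℝ V]
    (J J' : Finset (Fin k)) (hne : J ≠ J') :
    ∀ w : (∀ i, Z i) → V, Qop J (Qop J' w) = 0 := by
  intro w
  rw [← Qopₗ_apply, ← Qopₗ_apply, ← Module.End.mul_apply, Qopₗ_mul_Qopₗ_of_ne hne,
    LinearMap.zero_apply]

/-- for distinct `J, J'`, `Q_J ∘ Q_{J'} = 0`. -/
theorem Qop_comp_Qop_eq_zero {k : ℕ} (hk : 1 ≤ k) (Z : Fin k → Type*)
    [∀ i, Fintype (Z i)] [∀ i, Nonempty (Z i)] [∀ i, DecidableEq (Z i)]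
    (V : Type*) [AddCommGroup V] [Module ℝ V] [FiniteDimensional ℝ V]
    (J J' : Finset (Fin k)) (hne : J ≠ J') :
    ∀ w : (∀ i, Z i) → V, Qop J (Qop J' w) = 0 :=
  Qop_comp_Qop_eq_zero_general Z V J J' hne
end

section
/- Let A, B, C be a partition of the m + n coordinate indices of X × Y. The following are equivalent: (i) there exist functions f on the (A∪C)-subtuples, g on the (B∪C)-subtuples, and a strictly positive h : X → ℝ such that P(y|x) = f(z_A, z_C) · g(z_B, z_C) · h(x) for all (x, y), where z = (x, y); (ii) ⟨u_I(x), v_J(y)⟩ = 0 for all x ∈ X, y ∈ Y and all I ⊆ {1,…,m}, J ⊆ {1,…,n} with J ≠ ∅ such that the disjoint union I ⊔ J (as a set of coordinate indices of X × Y) meets both A and B. -/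
/-!
Read as a function on the product of all `m + n` coordinates, the logit `⟪u x, v y⟫` is the sum
of its interaction components, and the component on `I ⊔ J` is `⟪u_I(x), v_J(y)⟫`. Taking
logarithms, the factorization says exactly that the logit splits as `a + b + c` with `a`
depending only on the coordinates in `A ∪ C`, `b` only on those in `B ∪ C`, and `c` only on `x`.
The projection `Q_K` kills every function that does not depend on some coordinate in `K`, so such
a splitting forces the components with `J ≠ ∅` and `I ⊔ J` meeting both `A` and `B` to vanish.
Conversely, if they vanish, sorting the remaining components by whether `J = ∅`, or else whether
`I ⊔ J` avoids `B` or avoids `A`, produces such a splitting.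
-/

open Finset
open scoped RealInnerProductSpace

universe u

/-- Combined family of factors, indexed by `Fin m ⊕ Fin n`. -/
def sumFam {m n : ℕ} (X : Fin m → Type u) (Y : Fin n → Type u) : Fin m ⊕ Fin n → Type u :=
  Sum.elim X Y

instance sumFam.fintype {m n : ℕ} (X : Fin m → Type u) (Y : Fin n → Type u)
    [∀ i, Fintype (X i)] [∀ j, Fintype (Y j)] : ∀ s, Fintype (sumFam X Y s)
  | .inl i => inferInstanceAs (Fintype (X i))
  | .inr j => inferInstanceAs (Fintype (Y j))

instance sumFam.decEq {m n : ℕ} (X : Fin m → Type u) (Y : Fin n → Type u)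
    [∀ i, DecidableEq (X i)] [∀ j, DecidableEq (Y j)] : ∀ s, DecidableEq (sumFam X Y s)
  | .inl i => inferInstanceAs (DecidableEq (X i))
  | .inr j => inferInstanceAs (DecidableEq (Y j))

instance sumFam.nonempty {m n : ℕ} (X : Fin m → Type u) (Y : Fin n → Type u)
    [∀ i, Nonempty (X i)] [∀ j, Nonempty (Y j)] : ∀ s, Nonempty (sumFam X Y s)
  | .inl i => inferInstanceAs (Nonempty (X i))
  | .inr j => inferInstanceAs (Nonempty (Y j))

/-- A pair `(x, y)` of tuples viewed as a single tuple indexed by `Fin m ⊕ Fin n`. -/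
def glue {m n : ℕ} {X : Fin m → Type u} {Y : Fin n → Type u}
    (x : ∀ i, X i) (y : ∀ j, Y j) : ∀ s, sumFam X Y s
  | .inl i => x i
  | .inr j => y j

/-- First projection of a combined tuple. -/
def projX {m n : ℕ} {X : Fin m → Type u} {Y : Fin n → Type u}
    (z : ∀ s, sumFam X Y s) : ∀ i, X i := fun i => z (.inl i)

/-- Second projection of a combined tuple. -/
def projY {m n : ℕ} {X : Fin m → Type u} {Y : Fin n → Type u}
    (z : ∀ s, sumFam X Y s) : ∀ j, Y j := fun j => z (.inr j)

/-- The marginal density of `q` on the coordinates in `S`, viewed as a function of the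
full tuple (depending only on the `S`-coordinates). -/
def marg {ι : Type*} [Fintype ι] [DecidableEq ι] {Z : ι → Type*} [∀ i, Fintype (Z i)]
    [∀ i, DecidableEq (Z i)] (S : Finset ι) (q : (∀ i, Z i) → ℝ) (z : ∀ i, Z i) : ℝ :=
  ∑ z' ∈ Finset.univ.filter (fun z' : ∀ i, Z i => ∀ i ∈ S, z' i = z i), q z'

lemma dependsOn_sum {ι κ M : Type*} {α : ι → Type*} [AddCommMonoid M] (s : Finset κ)
    {f : κ → (∀ i, α i) → M} {T : Set ι} (hf : ∀ k ∈ s, DependsOn (f k) T) :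
    DependsOn (fun z => ∑ k ∈ s, f k z) T :=
  fun _ _ h => sum_congr rfl fun k hk => hf k hk h

lemma Finset.sum_powerset_disjSum {α β M : Type*} [AddCommMonoid M] (s : Finset α)
    (t : Finset β) (f : Finset (α ⊕ β) → M) :
    ∑ K ∈ (s.disjSum t).powerset, f K = ∑ p ∈ s.powerset ×ˢ t.powerset, f (p.1.disjSum p.2) :=
  sum_equiv sumEquiv.toEquiv (by simp [subset_disjSum]) (by simp [toLeft_disjSum_toRight])

lemma Finset.sum_superset_neg_one_pow_card_sdiff {ι : Type*} [Fintype ι] [DecidableEq ι]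
    (J : Finset ι) : ∑ S with J ⊆ S, (-1 : ℝ) ^ #(S \ J) = if J = univ then 1 else 0 := by
  have hreindex : ∑ S with J ⊆ S, (-1 : ℝ) ^ #(S \ J) = ∑ T ∈ Jᶜ.powerset, (-1 : ℝ) ^ #T := by
    refine sum_nbij' (· \ J) (J ∪ ·) ?_ ?_ ?_ ?_ fun _ _ => rfl
    · intro S _
      simp [subset_iff]
    · intro T _
      simp
    · intro S hS
      exact union_sdiff_of_subset (mem_filter.1 hS).2
    · intro T hT
      exact union_sdiff_cancel_left
        (disjoint_of_subset_right (mem_powerset.1 hT) disjoint_compl_right)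
  rw [hreindex]
  exact_mod_cast (sum_powerset_neg_one_pow_card (x := Jᶜ)).trans (by simp)

lemma Finset.compl_eq_union_of_partition {α : Type*} [Fintype α] [DecidableEq α]
    {A B C : Finset α} (hAB : Disjoint A B) (hAC : Disjoint A C) (hABC : A ∪ B ∪ C = univ) :
    Aᶜ = B ∪ C := by
  ext s
  have hs : s ∈ A ∪ B ∪ C := hABC ▸ mem_univ s
  simp only [mem_union] at hs
  simp only [mem_compl, mem_union]
  constructor
  · tauto
  · rintro (hB | hC) hA
    exacts [disjoint_left.1 hAB hA hB, disjoint_left.1 hAC hA hC]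

section Interactions

variable {ι : Type*} [Fintype ι] [DecidableEq ι] {Z : ι → Type*}
  [∀ i, Fintype (Z i)] [∀ i, DecidableEq (Z i)]

lemma sum_agree_eq_card_smul_sum_agree_insert {M : Type*} [AddCommMonoid M]
    {w : (∀ i, Z i) → M} {T : Set ι} (hw : DependsOn w T) {J : Finset ι} {j : ι} (hjJ : j ∉ J)
    (hjT : j ∉ T) (z : ∀ i, Z i) :
    ∑ z' with ∀ i ∈ J, z' i = z i, w z' =
      Fintype.card (Z j) • ∑ z' with ∀ i ∈ insert j J, z' i = z i, w z' := by
  have hw_update (z' : ∀ i, Z i) (a : Z j) : w (Function.update z' j a) = w z' :=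
    hw fun i hi => Function.update_of_ne (ne_of_mem_of_not_mem hi hjT) _ _
  rw [← sum_fiberwise_of_maps_to (g := fun z' => z' j) (t := univ) fun _ _ => mem_univ _,
    ← card_univ, ← sum_const]
  refine sum_congr rfl fun a _ => ?_
  refine sum_nbij' (Function.update · j (z j)) (Function.update · j a) ?_ ?_ ?_ ?_
    fun z' _ => (hw_update z' _).symm
  · intro z' hz'
    simp only [mem_filter, mem_univ, true_and, mem_insert, forall_eq_or_imp] at hz' ⊢
    refine ⟨by simp, fun i hi => ?_⟩
    rw [Function.update_of_ne (ne_of_mem_of_not_mem hi hjJ)]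
    exact hz'.1 i hi
  · intro z' hz'
    simp only [mem_filter, mem_univ, true_and, mem_insert, forall_eq_or_imp] at hz' ⊢
    refine ⟨fun i hi => ?_, by simp⟩
    rw [Function.update_of_ne (ne_of_mem_of_not_mem hi hjJ)]
    exact hz'.2 i hi
  · intro z' hz'
    simp only [mem_filter, mem_univ, true_and] at hz'
    rw [Function.update_idem, ← hz'.2, Function.update_eq_self]
  · intro z' hz'
    simp only [mem_filter, mem_univ, true_and, mem_insert, forall_eq_or_imp] at hz'
    rw [Function.update_idem, ← hz'.1, Function.update_eq_self]

variable {V : Type*} [AddCommGroup V] [Module ℝ V]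

lemma dependsOn_piAvg (J : Finset ι) (w : (∀ i, Z i) → V) : DependsOn (piAvg J w) J := by
  intro z z' h
  simp only [piAvg, mem_coe] at h ⊢
  congr 2
  exact filter_congr fun z'' _ => forall₂_congr fun i hi => by rw [h i hi]

lemma dependsOn_Qop (I : Finset ι) (w : (∀ i, Z i) → V) : DependsOn (Qop I w) I := by
  intro z z' h
  simp only [Qop, Finset.sum_apply, Pi.smul_apply]
  refine sum_congr rfl fun J hJ => ?_
  rw [dependsOn_piAvg J w fun i hi => h i (mem_powerset.1 hJ hi)]

lemma piAvg_add (J : Finset ι) (a b : (∀ i, Z i) → V) :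
    piAvg J (a + b) = piAvg J a + piAvg J b := by
  ext z
  simp [piAvg, sum_add_distrib, smul_add]

lemma Qop_add (I : Finset ι) (a b : (∀ i, Z i) → V) :
    Qop I (a + b) = Qop I a + Qop I b := by
  simp only [Qop, piAvg_add, smul_add, sum_add_distrib]

lemma piAvg_univ (w : (∀ i, Z i) → V) : piAvg univ w = w := by
  ext z
  have hfiber : ({z' | ∀ i ∈ univ, z' i = z i} : Finset (∀ i, Z i)) = {z} := by
    ext z'
    simp [funext_iff]
  rw [piAvg, hfiber, compl_univ, prod_empty, inv_one, one_smul, sum_singleton]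

theorem sum_Qop (w : (∀ i, Z i) → V) (z : ∀ i, Z i) : ∑ S, Qop S w z = w z := by
  simp only [Qop, Finset.sum_apply, Pi.smul_apply]
  rw [sum_comm' (t' := univ) (s' := fun J => {S | J ⊆ S}) (by simp)]
  simp only [← sum_smul, sum_superset_neg_one_pow_card_sdiff, ite_smul, one_smul, zero_smul,
    sum_ite_eq', mem_univ, if_true, piAvg_univ]

variable [∀ i, Nonempty (Z i)]

lemma piAvg_insert_of_dependsOn {w : (∀ i, Z i) → V} {T : Set ι} (hw : DependsOn w T)
    {J : Finset ι} {j : ι} (hjJ : j ∉ J) (hjT : j ∉ T) : piAvg (insert j J) w = piAvg J w := by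
  ext z
  have hcard : ∏ i ∈ Jᶜ, (Fintype.card (Z i) : ℝ)
      = Fintype.card (Z j) * ∏ i ∈ (insert j J)ᶜ, (Fintype.card (Z i) : ℝ) := by
    rw [compl_insert]
    exact (mul_prod_erase _ _ (mem_compl.2 hjJ)).symm
  have hcard_ne : (Fintype.card (Z j) : ℝ) ≠ 0 := Nat.cast_ne_zero.2 Fintype.card_ne_zero
  rw [piAvg, piAvg, sum_agree_eq_card_smul_sum_agree_insert hw hjJ hjT, hcard,
    ← Nat.cast_smul_eq_nsmul ℝ, smul_smul, mul_inv, mul_right_comm, inv_mul_cancel₀ hcard_ne,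
    one_mul]

theorem Qop_eq_zero_of_dependsOn {w : (∀ i, Z i) → V} {T : Set ι} (hw : DependsOn w T)
    {S : Finset ι} {j : ι} (hjS : j ∈ S) (hjT : j ∉ T) : Qop S w = 0 := by
  obtain ⟨S, hjS', rfl⟩ : ∃ S', j ∉ S' ∧ insert j S' = S :=
    ⟨S.erase j, notMem_erase j S, insert_erase hjS⟩
  rw [Qop, sum_powerset_insert hjS', ← sum_add_distrib]
  refine sum_eq_zero fun J hJ => ?_
  have hjJ : j ∉ J := fun h => hjS' (mem_powerset.1 hJ h)
  -- the terms for `J` and `insert j J` carry opposite signs and the same average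
  rw [piAvg_insert_of_dependsOn hw hjJ hjT, insert_sdiff_of_notMem _ hjJ,
    insert_sdiff_insert, sdiff_insert_of_notMem hjS', card_insert_of_notMem
      fun h => hjS' (mem_sdiff.1 h).1, pow_succ, ← add_smul]
  simp

end Interactions

section Glue

variable {m n : ℕ} {X : Fin m → Type u} {Y : Fin n → Type u}

lemma glue_projX_projY (z : ∀ s, sumFam X Y s) : glue (projX z) (projY z) = z :=
  funext fun s => by cases s <;> rfl

@[simp]
lemma projX_glue (x : ∀ i, X i) (y : ∀ j, Y j) : projX (glue x y) = x := rfl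

@[simp]
lemma projY_glue (x : ∀ i, X i) (y : ∀ j, Y j) : projY (glue x y) = y := rfl

lemma dependsOn_comp_projX {W : Type*} (c : (∀ i, X i) → W) :
    DependsOn (fun z : ∀ s, sumFam X Y s => c (projX z)) (Set.range Sum.inl) :=
  fun _ _ h => congrArg c <| funext fun i => h _ ⟨i, rfl⟩

variable [∀ i, Fintype (X i)] [∀ i, DecidableEq (X i)] [∀ j, Fintype (Y j)]
  [∀ j, DecidableEq (Y j)]

lemma sum_agree_glue {M : Type*} [AddCommMonoid M] (F : (∀ s, sumFam X Y s) → M)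
    (I : Finset (Fin m)) (J : Finset (Fin n)) (x : ∀ i, X i) (y : ∀ j, Y j) :
    ∑ z ∈ univ.filter (fun z : ∀ s, sumFam X Y s => ∀ s ∈ I.disjSum J, z s = glue x y s), F z =
      ∑ x' ∈ univ.filter (fun x' : ∀ i, X i => ∀ i ∈ I, x' i = x i),
        ∑ y' ∈ univ.filter (fun y' : ∀ j, Y j => ∀ j ∈ J, y' j = y j), F (glue x' y') := by
  rw [← sum_product']
  refine sum_nbij' (fun z => (projX z, projY z)) (fun p => glue p.1 p.2) ?_ ?_
    (fun z _ => glue_projX_projY z) (fun _ _ => rfl) (fun z _ => by rw [glue_projX_projY])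
  · intro z hz
    simp only [mem_filter, mem_univ, true_and, mem_product] at hz ⊢
    exact ⟨fun i hi => hz _ (inl_mem_disjSum.2 hi), fun j hj => hz _ (inr_mem_disjSum.2 hj)⟩
  · rintro ⟨x', y'⟩ hp
    simp only [mem_filter, mem_univ, true_and, mem_product] at hp ⊢
    rintro (i | j) hs
    exacts [hp.1 i (inl_mem_disjSum.1 hs), hp.2 j (inr_mem_disjSum.1 hs)]

variable {V : Type*} [NormedAddCommGroup V] [InnerProductSpace ℝ V]

lemma piAvg_inner_glue (u : (∀ i, X i) → V) (v : (∀ j, Y j) → V)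
    (I : Finset (Fin m)) (J : Finset (Fin n)) (x : ∀ i, X i) (y : ∀ j, Y j) :
    piAvg (I.disjSum J) (fun z : ∀ s, sumFam X Y s => ⟪u (projX z), v (projY z)⟫) (glue x y)
      = ⟪piAvg I u x, piAvg J v y⟫ := by
  have hcompl : (I.disjSum J)ᶜ = Iᶜ.disjSum Jᶜ := by
    ext s
    cases s <;> simp
  rw [piAvg, piAvg, piAvg, hcompl, prod_disjSum, sum_agree_glue, real_inner_smul_left,
    real_inner_smul_right, sum_inner, mul_inv, smul_eq_mul, mul_assoc]
  simp only [projX_glue, projY_glue, inner_sum]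
  -- the fibres on the two sides agree only up to their `Decidable` instances
  congr!

lemma Qop_inner_glue (u : (∀ i, X i) → V) (v : (∀ j, Y j) → V)
    (I : Finset (Fin m)) (J : Finset (Fin n)) (x : ∀ i, X i) (y : ∀ j, Y j) :
    Qop (I.disjSum J) (fun z : ∀ s, sumFam X Y s => ⟪u (projX z), v (projY z)⟫) (glue x y)
      = ⟪Qop I u x, Qop J v y⟫ := by
  rw [Qop, Qop, Qop, Finset.sum_apply, Finset.sum_apply, Finset.sum_apply, sum_powerset_disjSum,
    sum_product, sum_inner]
  refine sum_congr rfl fun I' _ => ?_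
  rw [inner_sum]
  refine sum_congr rfl fun J' _ => ?_
  simp only [Pi.smul_apply, inner_smul_left, inner_smul_right, RCLike.conj_to_real, smul_eq_mul,
    piAvg_inner_glue, ← card_toLeft_add_card_toRight, toLeft_sdiff, toRight_sdiff, toLeft_disjSum,
    toRight_disjSum, pow_add]
  ring

lemma inner_eq_sum_inner_Qop (u : (∀ i, X i) → V) (v : (∀ j, Y j) → V) (x : ∀ i, X i)
    (y : ∀ j, Y j) :
    ⟪u x, v y⟫ = ∑ p : Finset (Fin m) × Finset (Fin n), ⟪Qop p.1 u x, Qop p.2 v y⟫ := by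
  conv_lhs => rw [← sum_Qop u x, ← sum_Qop v y]
  simp only [sum_inner, inner_sum, Fintype.sum_prod_type]
  exact sum_comm

lemma dependsOn_inner_Qop (u : (∀ i, X i) → V) (v : (∀ j, Y j) → V) (I : Finset (Fin m))
    (J : Finset (Fin n)) :
    DependsOn (fun z : ∀ s, sumFam X Y s => ⟪Qop I u (projX z), Qop J v (projY z)⟫)
      (I.disjSum J : Set (Fin m ⊕ Fin n)) := fun _ _ h =>
  congrArg₂ _ (dependsOn_Qop I u fun _ hi => h _ (inl_mem_disjSum.2 hi))
    (dependsOn_Qop J v fun _ hj => h _ (inr_mem_disjSum.2 hj))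

end Glue

theorem exists_softmax_factorization_iff_exists_logit_decomposition {m n : ℕ}
    {X : Fin m → Type u} {Y : Fin n → Type u} [∀ j, Fintype (Y j)] [Nonempty (∀ j, Y j)]
    (φ : (∀ i, X i) → (∀ j, Y j) → ℝ) (S T : Set (Fin m ⊕ Fin n)) :
    (∃ (f g : (∀ s, sumFam X Y s) → ℝ) (h : (∀ i, X i) → ℝ),
      DependsOn f S ∧ DependsOn g T ∧ (∀ x, 0 < h x) ∧
      ∀ x y, Real.exp (φ x y) / ∑ y', Real.exp (φ x y') = f (glue x y) * g (glue x y) * h x) ↔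
    ∃ (a b : (∀ s, sumFam X Y s) → ℝ) (c : (∀ i, X i) → ℝ),
      DependsOn a S ∧ DependsOn b T ∧ ∀ x y, φ x y = a (glue x y) + b (glue x y) + c x := by
  have hZ (x : ∀ i, X i) : 0 < ∑ y', Real.exp (φ x y') :=
    sum_pos (fun _ _ => Real.exp_pos _) univ_nonempty
  constructor
  · rintro ⟨f, g, h, hf, hg, -, hfac⟩
    refine ⟨fun z => Real.log (f z), fun z => Real.log (g z),
      fun x => Real.log (h x) + Real.log (∑ y', Real.exp (φ x y')),
      fun z z' hzz => congrArg Real.log (hf hzz), fun z z' hzz => congrArg Real.log (hg hzz),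
      fun x y => ?_⟩
    have hexp : Real.exp (φ x y)
        = f (glue x y) * g (glue x y) * (h x * ∑ y', Real.exp (φ x y')) := by
      rw [← mul_assoc, ← hfac, div_mul_cancel₀ _ (hZ x).ne']
    have hne : f (glue x y) * g (glue x y) * (h x * ∑ y', Real.exp (φ x y')) ≠ 0 :=
      hexp ▸ (Real.exp_pos _).ne'
    simp only [mul_ne_zero_iff] at hne
    -- `Real.log` is even, so no sign condition on `f`, `g` or `h` is needed
    rw [← Real.log_exp (φ x y), hexp, Real.log_mul (by simp [hne]) (by simp [hne]),
      Real.log_mul hne.1.1 hne.1.2, Real.log_mul hne.2.1 hne.2.2, add_assoc]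
  · rintro ⟨a, b, c, ha, hb, hdec⟩
    refine ⟨fun z => Real.exp (a z), fun z => Real.exp (b z),
      fun x => Real.exp (c x) / ∑ y', Real.exp (φ x y'),
      fun z z' hzz => congrArg Real.exp (ha hzz), fun z z' hzz => congrArg Real.exp (hb hzz),
      fun x => div_pos (Real.exp_pos _) (hZ x), fun x y => ?_⟩
    rw [hdec, Real.exp_add, Real.exp_add, mul_div_assoc]

section Logit

variable {m n : ℕ} {X : Fin m → Type u} {Y : Fin n → Type u}
  [∀ i, Fintype (X i)] [∀ i, DecidableEq (X i)]
  [∀ j, Fintype (Y j)] [∀ j, DecidableEq (Y j)] [∀ j, Nonempty (Y j)]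
  {V : Type*} [NormedAddCommGroup V] [InnerProductSpace ℝ V]

theorem exists_logit_decomposition_of_inner_Qop_eq_zero (u : (∀ i, X i) → V)
    (v : (∀ j, Y j) → V) {S T : Set (Fin m ⊕ Fin n)}
    (horth : ∀ (I : Finset (Fin m)) (J : Finset (Fin n)), J ≠ ∅ →
      ¬ (I.disjSum J : Set (Fin m ⊕ Fin n)) ⊆ S → ¬ (I.disjSum J : Set (Fin m ⊕ Fin n)) ⊆ T →
      ∀ x y, ⟪Qop I u x, Qop J v y⟫ = 0) :
    ∃ (a b : (∀ s, sumFam X Y s) → ℝ) (c : (∀ i, X i) → ℝ),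
      DependsOn a S ∧ DependsOn b T ∧ ∀ x y, ⟪u x, v y⟫ = a (glue x y) + b (glue x y) + c x := by
  classical
  obtain ⟨y₀⟩ : Nonempty (∀ j, Y j) := inferInstance
  let term (p : Finset (Fin m) × Finset (Fin n)) (z : ∀ s, sumFam X Y s) : ℝ :=
    ⟪Qop p.1 u (projX z), Qop p.2 v (projY z)⟫
  let inS (p : Finset (Fin m) × Finset (Fin n)) : Prop :=
    (p.1.disjSum p.2 : Set (Fin m ⊕ Fin n)) ⊆ S
  refine ⟨fun z => ∑ p : Finset (Fin m) × Finset (Fin n) with p.2 ≠ ∅ ∧ inS p, term p z,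
    fun z => ∑ p : Finset (Fin m) × Finset (Fin n) with p.2 ≠ ∅ ∧ ¬ inS p, term p z,
    fun x => ∑ p : Finset (Fin m) × Finset (Fin n) with p.2 = ∅, ⟪Qop p.1 u x, Qop p.2 v y₀⟫,
    ?_, ?_, fun x y => ?_⟩
  · refine dependsOn_sum _ fun p hp => ?_
    exact (dependsOn_inner_Qop u v p.1 p.2).mono (mem_filter.1 hp).2.2
  · refine dependsOn_sum _ fun p hp => ?_
    obtain ⟨hJ, hS⟩ := (mem_filter.1 hp).2
    by_cases hT : (p.1.disjSum p.2 : Set (Fin m ⊕ Fin n)) ⊆ T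
    · exact (dependsOn_inner_Qop u v p.1 p.2).mono hT
    · intro z z' _
      simp only [term, horth p.1 p.2 hJ hS hT]
  · have hc : ∑ p : Finset (Fin m) × Finset (Fin n) with p.2 = ∅, ⟪Qop p.1 u x, Qop p.2 v y₀⟫
        = ∑ p : Finset (Fin m) × Finset (Fin n) with p.2 = ∅, term p (glue x y) := by
      refine sum_congr rfl fun p hp => ?_
      simp only [term, projX_glue, projY_glue, (mem_filter.1 hp).2]
      rw [dependsOn_Qop ∅ v (x := y₀) (y := y) (by simp)]
    beta_reduce
    rw [hc, inner_eq_sum_inner_Qop, ← sum_filter_not_add_sum_filter _ (fun p => p.2 = ∅),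
      ← sum_filter_add_sum_filter_not _ inS, filter_filter, filter_filter]
    rfl

variable [∀ i, Nonempty (X i)]

theorem inner_Qop_eq_zero_of_logit_decomposition {u : (∀ i, X i) → V} {v : (∀ j, Y j) → V}
    {S T : Set (Fin m ⊕ Fin n)} {a b : (∀ s, sumFam X Y s) → ℝ} {c : (∀ i, X i) → ℝ}
    (ha : DependsOn a S) (hb : DependsOn b T)
    (hdec : ∀ x y, ⟪u x, v y⟫ = a (glue x y) + b (glue x y) + c x)
    {I : Finset (Fin m)} {J : Finset (Fin n)} (hJ : J ≠ ∅)
    (hS : ¬ (I.disjSum J : Set (Fin m ⊕ Fin n)) ⊆ S)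
    (hT : ¬ (I.disjSum J : Set (Fin m ⊕ Fin n)) ⊆ T) (x : ∀ i, X i) (y : ∀ j, Y j) :
    ⟪Qop I u x, Qop J v y⟫ = 0 := by
  have hlogit : (fun z : ∀ s, sumFam X Y s => ⟪u (projX z), v (projY z)⟫)
      = a + b + fun z => c (projX z) := by
    ext z
    simpa only [glue_projX_projY, Pi.add_apply] using hdec (projX z) (projY z)
  obtain ⟨s, hsK, hsS⟩ := Set.not_subset.1 hS
  obtain ⟨t, htK, htT⟩ := Set.not_subset.1 hT
  obtain ⟨j, hj⟩ := nonempty_iff_ne_empty.2 hJ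
  rw [← Qop_inner_glue, hlogit, Qop_add, Qop_add, Qop_eq_zero_of_dependsOn ha hsK hsS,
    Qop_eq_zero_of_dependsOn hb htK htT,
    Qop_eq_zero_of_dependsOn (dependsOn_comp_projX c) (inr_mem_disjSum.2 hj) (by simp)]
  simp

theorem exists_logit_decomposition_iff (u : (∀ i, X i) → V) (v : (∀ j, Y j) → V)
    (S T : Set (Fin m ⊕ Fin n)) :
    (∃ (a b : (∀ s, sumFam X Y s) → ℝ) (c : (∀ i, X i) → ℝ),
      DependsOn a S ∧ DependsOn b T ∧ ∀ x y, ⟪u x, v y⟫ = a (glue x y) + b (glue x y) + c x) ↔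
    ∀ (I : Finset (Fin m)) (J : Finset (Fin n)), J ≠ ∅ →
      ¬ (I.disjSum J : Set (Fin m ⊕ Fin n)) ⊆ S → ¬ (I.disjSum J : Set (Fin m ⊕ Fin n)) ⊆ T →
      ∀ x y, ⟪Qop I u x, Qop J v y⟫ = 0 :=
  ⟨fun ⟨_, _, _, ha, hb, hdec⟩ _ _ hJ hS hT =>
      inner_Qop_eq_zero_of_logit_decomposition ha hb hdec hJ hS hT,
    exists_logit_decomposition_of_inner_Qop_eq_zero u v⟩

end Logit

theorem factorization_iff_interactions_orthogonal_general {m n : ℕ}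
    (X : Fin m → Type u) (Y : Fin n → Type u)
    [∀ i, Fintype (X i)] [∀ i, Nonempty (X i)] [∀ i, DecidableEq (X i)]
    [∀ j, Fintype (Y j)] [∀ j, Nonempty (Y j)] [∀ j, DecidableEq (Y j)]
    (V : Type*) [NormedAddCommGroup V] [InnerProductSpace ℝ V]
    (u : (∀ i, X i) → V) (v : (∀ j, Y j) → V)
    (P : (∀ i, X i) → (∀ j, Y j) → ℝ)
    (hP : ∀ x y, P x y =
      Real.exp ⟪u x, v y⟫ / ∑ y' : ∀ j, Y j, Real.exp ⟪u x, v y'⟫)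
    (A B C : Finset (Fin m ⊕ Fin n))
    (hAB : Disjoint A B) (hAC : Disjoint A C) (hBC : Disjoint B C)
    (hABC : A ∪ B ∪ C = Finset.univ) :
    (∃ (f g : (∀ s, sumFam X Y s) → ℝ) (h : (∀ i, X i) → ℝ),
      (∀ z z' : ∀ s, sumFam X Y s, (∀ s ∈ A ∪ C, z s = z' s) → f z = f z') ∧
      (∀ z z' : ∀ s, sumFam X Y s, (∀ s ∈ B ∪ C, z s = z' s) → g z = g z') ∧
      (∀ x, 0 < h x) ∧
      (∀ (x : ∀ i, X i) (y : ∀ j, Y j), P x y = f (glue x y) * g (glue x y) * h x)) ↔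
    (∀ (I : Finset (Fin m)) (J : Finset (Fin n)), J ≠ ∅ →
      ((I.disjSum J) ∩ A).Nonempty → ((I.disjSum J) ∩ B).Nonempty →
      ∀ (x : ∀ i, X i) (y : ∀ j, Y j), ⟪Qop I u x, Qop J v y⟫ = 0) := by
  obtain rfl : P = fun x y => Real.exp ⟪u x, v y⟫ / ∑ y', Real.exp ⟪u x, v y'⟫ :=
    funext fun x => funext (hP x)
  have hA : Aᶜ = B ∪ C := compl_eq_union_of_partition hAB hAC hABC
  have hB : Bᶜ = A ∪ C :=
    compl_eq_union_of_partition hAB.symm hBC (by rw [← hABC, union_comm A B])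
  refine (exists_softmax_factorization_iff_exists_logit_decomposition
    (fun x y => ⟪u x, v y⟫) ↑(A ∪ C) ↑(B ∪ C)).trans
    ((exists_logit_decomposition_iff u v _ _).trans ?_)
  simp only [coe_subset, ← hA, ← hB, subset_compl_iff_disjoint_right,
    not_disjoint_iff_nonempty_inter]
  exact forall₂_congr fun _ _ => imp_congr_right fun _ => forall_comm

/-- main theorem: for the softmax model, the factorization
`P(y|x) = f(z_A, z_C) · g(z_B, z_C) · h(x)` holds if and only if
`⟨u_I(x), v_J(y)⟩ = 0` for all `I ⊆ [m]`, `J ⊆ [n]` with `J ≠ ∅` such that the disjoint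
union `I ⊔ J` meets both `A` and `B`. -/
theorem factorization_iff_interactions_orthogonal {m n : ℕ}
    (X : Fin m → Type u) (Y : Fin n → Type u)
    [∀ i, Fintype (X i)] [∀ i, Nonempty (X i)] [∀ i, DecidableEq (X i)]
    [∀ j, Fintype (Y j)] [∀ j, Nonempty (Y j)] [∀ j, DecidableEq (Y j)]
    (V : Type*) [NormedAddCommGroup V] [InnerProductSpace ℝ V] [FiniteDimensional ℝ V]
    (u : (∀ i, X i) → V) (v : (∀ j, Y j) → V)
    (P : (∀ i, X i) → (∀ j, Y j) → ℝ)
    (hP : ∀ x y, P x y =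
      Real.exp ⟪u x, v y⟫ / ∑ y' : ∀ j, Y j, Real.exp ⟪u x, v y'⟫)
    (A B C : Finset (Fin m ⊕ Fin n))
    (hAB : Disjoint A B) (hAC : Disjoint A C) (hBC : Disjoint B C)
    (hABC : A ∪ B ∪ C = Finset.univ) :
    (∃ (f g : (∀ s, sumFam X Y s) → ℝ) (h : (∀ i, X i) → ℝ),
      (∀ z z' : ∀ s, sumFam X Y s, (∀ s ∈ A ∪ C, z s = z' s) → f z = f z') ∧
      (∀ z z' : ∀ s, sumFam X Y s, (∀ s ∈ B ∪ C, z s = z' s) → g z = g z') ∧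
      (∀ x, 0 < h x) ∧
      (∀ (x : ∀ i, X i) (y : ∀ j, Y j), P x y = f (glue x y) * g (glue x y) * h x)) ↔
    (∀ (I : Finset (Fin m)) (J : Finset (Fin n)), J ≠ ∅ →
      ((I.disjSum J) ∩ A).Nonempty → ((I.disjSum J) ∩ B).Nonempty →
      ∀ (x : ∀ i, X i) (y : ∀ j, Y j), ⟪Qop I u x, Qop J v y⟫ = 0) :=
  factorization_iff_interactions_orthogonal_general X Y V u v P hP A B C hAB hAC hBC hABC
end
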